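/- Let (X, ◁) be a quandle (a rack with x ◁ x = x for all x) whose permutation group G(X, ◁) = ⟨λ_x : x ∈ X⟩ ⊆ Sym(X) is nilpotent of class n, where λ_x(y) = y ◁ x. Then the structure group G(X, ◁) = gr(X | x ∘ y = (y ◁ x) ∘ x) satisfies the Malcev identity x_{n+1} = y_{n+1}; i.e., G(X, ◁) is nilpotent of class at most n + 1. -/

import Mathlib

/-- Malcev's words: `(x₀, y₀) = (a, b)` and `x_{k+1} = x_k z_{k+1} y_k`,
`y_{k+1} = y_k z_{k+1} x_k`. A group is nilpotent of class `n` iff it satisfies the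
identity `x_n = y_n`. -/
def malcev {G : Type*} [Group G] (a b : G) (c : ℕ → G) : ℕ → G × G
  | 0 => (a, b)
  | n + 1 =>
      ((malcev a b c n).1 * c (n + 1) * (malcev a b c n).2,
       (malcev a b c n).2 * c (n + 1) * (malcev a b c n).1)

/-- The defining relations of the structure group of the rack/quandle solution
`r(x, y) = (y ◁ x, x)`: `x ∘ y = (y ◁ x) ∘ x`. -/
def quandleRels {X : Type*} (op : X → X → X) : Set (FreeGroup X) :=
  {w | ∃ x y : X,
    w = FreeGroup.of x * FreeGroup.of y * (FreeGroup.of (op y x) * FreeGroup.of x)⁻¹}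


/-! Conjugation in the structure group acts on the generators through the permutation group,
`g x g⁻¹ = λ_g(x)`, so the kernel of `G(X, ◁) → ⟨λ_x : x ∈ X⟩` is central. Malcev words commute
with homomorphisms, so if the image satisfies `x_n = y_n`, then `u = y_n⁻¹ x_n` is central and
`x_{n+1} = y_n u z y_n = y_n z y_n u = y_{n+1}`. That a group of class `n` satisfies `x_n = y_n`
follows from the same step applied to `G → G / Z(G)`. -/

section Malcev

variable {G H : Type*} [Group G] [Group H]

theorem map_malcev (f : G →* H) (a b : G) (c : ℕ → G) (n : ℕ) :
    f (malcev a b c n).1 = (malcev (f a) (f b) (f ∘ c) n).1 ∧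
      f (malcev a b c n).2 = (malcev (f a) (f b) (f ∘ c) n).2 := by
  induction n with
  | zero => exact ⟨rfl, rfl⟩
  | succ n ih => simp only [malcev, map_mul, ih.1, ih.2, Function.comp_apply, and_self]

theorem mul_mul_eq_of_inv_mul_mem_center {g h : G} (hc : h⁻¹ * g ∈ Subgroup.center G) (z : G) :
    g * z * h = h * z * g := by
  obtain ⟨u, hu, rfl⟩ : ∃ u ∈ Subgroup.center G, g = h * u := ⟨h⁻¹ * g, hc, by group⟩
  have hu := Subgroup.mem_center_iff.1 hu
  calc h * u * z * h = h * z * h * u := by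
        rw [mul_assoc h u z, ← hu z, mul_assoc, mul_assoc, mul_assoc, ← hu h, mul_assoc]
    _ = h * z * (h * u) := by group

theorem malcev_succ_eq_of_ker_le_center (f : G →* H) (hf : f.ker ≤ Subgroup.center G) {n : ℕ}
    (hH : ∀ (a b : H) (c : ℕ → H), (malcev a b c n).1 = (malcev a b c n).2)
    (a b : G) (c : ℕ → G) : (malcev a b c (n + 1)).1 = (malcev a b c (n + 1)).2 := by
  have himage : f (malcev a b c n).1 = f (malcev a b c n).2 := by
    rw [(map_malcev f a b c n).1, (map_malcev f a b c n).2]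
    exact hH _ _ _
  have hcenter : (malcev a b c n).2⁻¹ * (malcev a b c n).1 ∈ Subgroup.center G :=
    hf (by rw [MonoidHom.mem_ker, map_mul, map_inv, himage, inv_mul_cancel])
  exact mul_mul_eq_of_inv_mul_mem_center hcenter (c (n + 1))

theorem malcev_eq_of_upperCentralSeries_eq_top {n : ℕ} (hG : Subgroup.upperCentralSeries G n = ⊤)
    (a b : G) (c : ℕ → G) : (malcev a b c n).1 = (malcev a b c n).2 := by
  induction n generalizing G with
  | zero =>
    have hbot : (⊥ : Subgroup G) = ⊤ := hG
    have ha : a = 1 := Subgroup.mem_bot.1 (hbot ▸ Subgroup.mem_top a)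
    have hb : b = 1 := Subgroup.mem_bot.1 (hbot ▸ Subgroup.mem_top b)
    simp [malcev, ha, hb]
  | succ n ih =>
    have hquot : Subgroup.upperCentralSeries (G ⧸ Subgroup.center G) n = ⊤ := by
      apply Subgroup.comap_injective (QuotientGroup.mk'_surjective (Subgroup.center G))
      rw [Subgroup.comap_upperCentralSeries_quotient_center, Subgroup.comap_top]
      exact hG
    exact malcev_succ_eq_of_ker_le_center _ (QuotientGroup.ker_mk' _).le (ih hquot) a b c

end Malcev

section Rack

variable {X : Type*} (op : X → X → X) (hbij : ∀ y, Function.Bijective fun x => op x y)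
  (hsd : ∀ x y z, op (op x y) z = op (op x z) (op y z))

noncomputable def rightTranslation (t : X) : Equiv.Perm X :=
  Equiv.ofBijective (fun w => op w t) (hbij t)

def rackPermGroup : Subgroup (Equiv.Perm X) :=
  Subgroup.closure (Set.range (rightTranslation op hbij))

noncomputable def rightTranslationInPermGroup (t : X) : rackPermGroup op hbij :=
  ⟨rightTranslation op hbij t, Subgroup.subset_closure ⟨t, rfl⟩⟩

noncomputable def structureGroupToPermGroup :
    PresentedGroup (quandleRels op) →* rackPermGroup op hbij :=
  PresentedGroup.toGroup (f := rightTranslationInPermGroup op hbij) <| by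
    rintro _ ⟨x, y, rfl⟩
    simp only [map_mul, map_inv, FreeGroup.lift_apply_of, mul_inv_eq_one]
    ext w
    exact hsd w y x

theorem structureGroupToPermGroup_of (x : X) :
    (structureGroupToPermGroup op hbij hsd (PresentedGroup.of x) : Equiv.Perm X) =
      rightTranslation op hbij x := by
  rw [structureGroupToPermGroup, PresentedGroup.toGroup.of]
  rfl

theorem of_mul_of_quandleRels (x y : X) :
    PresentedGroup.of (rels := quandleRels op) x * PresentedGroup.of y =
      PresentedGroup.of (op y x) * PresentedGroup.of x := by
  rw [← mul_inv_eq_one]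
  exact (QuotientGroup.eq_one_iff _).2 (Subgroup.subset_normalClosure ⟨x, y, rfl⟩)

theorem conj_of_eq_of_structureGroupToPermGroup (g : PresentedGroup (quandleRels op)) (y : X) :
    g * PresentedGroup.of y * g⁻¹ =
      PresentedGroup.of ((structureGroupToPermGroup op hbij hsd g : Equiv.Perm X) y) := by
  have hg : g ∈ Subgroup.closure (Set.range PresentedGroup.of) := by
    rw [PresentedGroup.closure_range_of]; trivial
  induction hg using Subgroup.closure_induction generalizing y with
  | mem _ hx =>
    obtain ⟨x, rfl⟩ := hx
    rw [structureGroupToPermGroup_of, of_mul_of_quandleRels, mul_inv_cancel_right]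
    rfl
  | one => simp
  | mul g h _ _ hg hh =>
    rw [map_mul, Subgroup.coe_mul, Equiv.Perm.mul_apply, ← hg, ← hh]
    group
  | inv g _ hg =>
    have h := hg ((structureGroupToPermGroup op hbij hsd g : Equiv.Perm X)⁻¹ y)
    rw [← Equiv.Perm.mul_apply, mul_inv_cancel, Equiv.Perm.one_apply] at h
    rw [map_inv, Subgroup.coe_inv, ← h]
    group

theorem ker_structureGroupToPermGroup_le_center :
    (structureGroupToPermGroup op hbij hsd).ker ≤
      Subgroup.center (PresentedGroup (quandleRels op)) := by
  intro g hg
  rw [← Subgroup.centralizer_univ, ← Subgroup.coe_top, ← PresentedGroup.closure_range_of,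
    Subgroup.centralizer_closure]
  rintro _ ⟨y, rfl⟩
  have h := conj_of_eq_of_structureGroupToPermGroup op hbij hsd g y
  rw [(structureGroupToPermGroup op hbij hsd).mem_ker.1 hg, Subgroup.coe_one,
    Equiv.Perm.one_apply, mul_inv_eq_iff_eq_mul] at h
  exact h.symm

end Rack

theorem quandle_structure_group_nilpotent_general {X : Type*} (op : X → X → X)
    (hsd : ∀ x y z, op (op x y) z = op (op x z) (op y z))
    (hbij : ∀ y, Function.Bijective fun x => op x y)
    (n : ℕ)
    (hnil : upperCentralSeries
      (↥(Subgroup.closure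
        (Set.range fun t => Equiv.ofBijective (fun w => op w t) (hbij t)))) n = ⊤) :
    ∀ (a b : PresentedGroup (quandleRels op)) (c : ℕ → PresentedGroup (quandleRels op)),
      (malcev a b c (n + 1)).1 = (malcev a b c (n + 1)).2 :=
  malcev_succ_eq_of_ker_le_center (structureGroupToPermGroup op hbij hsd)
    (ker_structureGroupToPermGroup_le_center op hbij hsd)
    (malcev_eq_of_upperCentralSeries_eq_top hnil)

/-- If `(X, ◁)` is a quandle whose permutation group `⟨λ_x : x ∈ X⟩ ≤ Sym(X)`
(`λ_x(y) = y ◁ x`) is nilpotent of class `n`, then the structure group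
`G(X, ◁) = gr(X ∣ x ∘ y = (y ◁ x) ∘ x)` satisfies the Malcev identity
`x_{n+1} = y_{n+1}`, i.e. it is nilpotent of class at most `n + 1`. -/
theorem quandle_structure_group_nilpotent {X : Type*} (op : X → X → X)
    (hsd : ∀ x y z, op (op x y) z = op (op x z) (op y z))
    (hbij : ∀ y, Function.Bijective fun x => op x y)
    (hquandle : ∀ x, op x x = x)
    (n : ℕ)
    (hnil : upperCentralSeries
      (↥(Subgroup.closure
        (Set.range fun t => Equiv.ofBijective (fun w => op w t) (hbij t)))) n = ⊤) :
    ∀ (a b : PresentedGroup (quandleRels op)) (c : ℕ → PresentedGroup (quandleRels op)),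
      (malcev a b c (n + 1)).1 = (malcev a b c (n + 1)).2 :=
  quandle_structure_group_nilpotent_general op hsd hbij n hnil
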